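/- (Theorem 2.11: balayage theorem.) In the matrix-product setting, assume P is transient, i.e. every positive finitely supported element of M lies in D(G). Let x be superharmonic and Y ⊆ I finite. Then: (i) all the iterates occurring in the series P_Y x := ∑_{k=0}^∞ ((id − F_Y) ∘ P)ᵏ (F_Y x) are defined, the series converges in M, P_Y x ≤ x, and F_Y(P_Y x) = F_Y x; (ii) if y is any superharmonic element with F_Y x ≤ F_Y y, then P_Y x ≤ y; (iii) P_Y x is a potential. -/

import Mathlib

/-!
The partial sums `u_N` of `P_Y x` satisfy `u_{N+1} = F_Y x + (1 - F_Y) P u_N`, so by induction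
they stay below every superharmonic `y` with `F_Y x ≤ F_Y y`; by domination this also keeps each
new term in `D(P)`. A Loewner-increasing net of matrices that is bounded above converges (its
quadratic forms do, and polarization recovers the entries), so `u_N ↑ L`. Along such bounded
increasing nets the extension `P` is continuous, which gives `L = F_Y x + (1 - F_Y) P L`: thus
`F_Y L = F_Y x` and `L` is superharmonic. Minimality puts `L` below the potential `G (F_Y x)`,
whose iterates `Pᴺ G (F_Y x) = ∑_{k ≥ N} Pᵏ (F_Y x)` tend to `0`; hence `Pᴺ L → 0`, and
`L` telescopes into the potential of its charge `L - P L`.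
-/

open Filter Topology
open scoped Classical ComplexOrder

namespace MartinMP

variable {I : Type*} {n : I → ℕ}

/-- The product `M = ∏ s, Matrix (Fin (n s)) (Fin (n s)) ℂ` of matrix algebras. -/
abbrev MP (I : Type*) (n : I → ℕ) := ∀ s : I, Matrix (Fin (n s)) (Fin (n s)) ℂ

/-- The order on `M`: `x ≤ y` iff `(y − x) s` is positive semidefinite for every `s`. -/
def MPle (x y : MP I n) : Prop := ∀ s : I, ((y - x) s).PosSemidef

/-- `0 ≤ x`: every component of `x` is positive semidefinite. -/
def MPos (x : MP I n) : Prop := ∀ s : I, (x s).PosSemidef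

/-- The projection `F_Y` killing all coordinates outside the finite set `Y`. -/
noncomputable def FY (Y : Finset I) (x : MP I n) : MP I n := fun s => if s ∈ Y then x s else 0

/-- `x` is finitely supported. -/
def FinSupp (x : MP I n) : Prop := ∃ Y : Finset I, FY Y x = x

variable (P₀ : MP I n → MP I n)

/-- `x ∈ D(P)`: `x ≥ 0` and the net `(P₀ (F_Y x))_Y` (over finite `Y ⊆ I` ordered by
inclusion) converges in the product topology. -/
def InDP (x : MP I n) : Prop :=
  MPos x ∧ ∃ L : MP I n, Tendsto (fun Y : Finset I => P₀ (FY Y x)) atTop (nhds L)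

/-- The extension `P` of `P₀`: `P x := lim_Y P₀ (F_Y x)` when the limit exists (`0` otherwise). -/
noncomputable def Papp (x : MP I n) : MP I n :=
  if h : ∃ L : MP I n, Tendsto (fun Y : Finset I => P₀ (FY Y x)) atTop (nhds L)
  then h.choose else 0

/-- `x ∈ D(G)`: all iterates `Pᵏ x` are defined and the series `∑ₖ Pᵏ x` converges. -/
def InDG (x : MP I n) : Prop :=
  (∀ k : ℕ, InDP P₀ ((Papp P₀)^[k] x)) ∧
  ∃ L : MP I n,
    Tendsto (fun N : ℕ => ∑ k ∈ Finset.range N, (Papp P₀)^[k] x) atTop (nhds L)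

/-- The potential `G x = ∑ₖ Pᵏ x` (junk value `0` if the series does not converge). -/
noncomputable def Gval (x : MP I n) : MP I n :=
  if h : ∃ L : MP I n,
      Tendsto (fun N : ℕ => ∑ k ∈ Finset.range N, (Papp P₀)^[k] x) atTop (nhds L)
  then h.choose else 0

/-- `x` is superharmonic: `x ≥ 0`, `x ∈ D(P)` and `P x ≤ x`. -/
def Superharmonic (x : MP I n) : Prop := InDP P₀ x ∧ MPle (Papp P₀ x) x

/-- `x` is a potential: `x = G y` for some `y ∈ D(G)`. -/
def IsPotential (x : MP I n) : Prop := ∃ y : MP I n, InDG P₀ y ∧ x = Gval P₀ y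

/-- One step of the operator `(id − F_Y) ∘ P`. -/
noncomputable def QY (Y : Finset I) (z : MP I n) : MP I n :=
  Papp P₀ z - FY Y (Papp P₀ z)

end MartinMP

open scoped MatrixOrder

theorem Complex.exists_tendsto_of_monotone {κ : Type*} [Preorder κ] [IsDirectedOrder κ]
    [Nonempty κ] {f : κ → ℂ} (hf : Monotone f) (hb : BddAbove (Set.range f)) :
    ∃ z, Tendsto f atTop (𝓝 z) := by
  obtain ⟨a₀⟩ := ‹Nonempty κ›
  obtain ⟨c, hc⟩ := hb
  have him : ∀ a, (f a).im = (f a₀).im := fun a => by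
    obtain ⟨b, hab, ha₀b⟩ := directed_of (· ≤ ·) a a₀
    exact (le_def.1 (hf hab)).2.trans (le_def.1 (hf ha₀b)).2.symm
  have hre : Tendsto (fun a => (f a).re) atTop (𝓝 (⨆ a, (f a).re)) :=
    tendsto_atTop_ciSup (fun a b h => (le_def.1 (hf h)).1)
      ⟨c.re, by rintro _ ⟨a, rfl⟩; exact (le_def.1 (hc ⟨a, rfl⟩)).1⟩
  refine ⟨(⨆ a, (f a).re : ℝ) + (f a₀).im * I, ?_⟩
  refine ((continuous_ofReal.tendsto _).comp hre |>.add_const _).congr fun a => ?_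
  simp [← him a, re_add_im]

namespace Matrix

variable {𝕜 m : Type*} [RCLike 𝕜] [Fintype m]

theorem isClosed_setOf_posSemidef : IsClosed {A : Matrix m m 𝕜 | A.PosSemidef} := by
  simp only [posSemidef_iff_dotProduct_mulVec, Set.ofPred_and, Set.ofPred_forall]
  exact (isClosed_eq continuous_id.matrix_conjTranspose continuous_id).inter <|
    isClosed_iInter fun v => isClosed_le continuous_const <|
      continuous_const.dotProduct (continuous_id.matrix_mulVec continuous_const)

instance : OrderClosedTopology (Matrix m m 𝕜) :=
  ⟨isClosed_le_of_isClosed_nonneg <| by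
    simpa only [nonneg_iff_posSemidef] using isClosed_setOf_posSemidef⟩

theorem dotProduct_mulVec_mono {A B : Matrix m m 𝕜} (h : A ≤ B) (v : m → 𝕜) :
    star v ⬝ᵥ (A *ᵥ v) ≤ star v ⬝ᵥ (B *ᵥ v) := by
  simpa [sub_mulVec, dotProduct_sub] using (le_iff.1 h).dotProduct_mulVec_nonneg v

open Complex in
noncomputable def ofQuadraticForm [DecidableEq m] (q : (m → ℂ) → ℂ) : Matrix m m ℂ := fun i j =>
  (q (Pi.single j 1 + Pi.single i 1) - q (Pi.single j 1 - Pi.single i 1) +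
    I * q (Pi.single j 1 + I • Pi.single i 1) - I * q (Pi.single j 1 - I • Pi.single i 1)) / 4

open Complex in
theorem ofQuadraticForm_dotProduct_mulVec [DecidableEq m] (A : Matrix m m ℂ) :
    ofQuadraticForm (fun v => star v ⬝ᵥ (A *ᵥ v)) = A := by
  ext i j
  rw [ofQuadraticForm, div_eq_iff four_ne_zero]
  simp only [star_add, star_sub, star_smul, Pi.star_single, star_one, mulVec_add, mulVec_sub,
    mulVec_smul, mulVec_single_one, dotProduct_add, add_dotProduct, dotProduct_sub,
    sub_dotProduct, smul_dotProduct, dotProduct_smul, single_dotProduct, col_apply, smul_eq_mul,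
    one_mul, RCLike.star_def, conj_I]
  linear_combination (2 * A j i - 2 * A i j) * I_sq

theorem exists_tendsto_of_monotone {κ : Type*} [Preorder κ] [IsDirectedOrder κ] [Nonempty κ]
    {u : κ → Matrix m m ℂ} (hu : Monotone u) (hb : BddAbove (Set.range u)) :
    ∃ L, Tendsto u atTop (𝓝 L) := by
  classical
  obtain ⟨c, hc⟩ := hb
  choose q hq using fun v : m → ℂ => Complex.exists_tendsto_of_monotone
    (fun a b h => dotProduct_mulVec_mono (hu h) v)
    ⟨_, by rintro _ ⟨a, rfl⟩; exact dotProduct_mulVec_mono (hc ⟨a, rfl⟩) v⟩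
  refine ⟨ofQuadraticForm q, tendsto_pi_nhds.2 fun i => tendsto_pi_nhds.2 fun j => ?_⟩
  refine (((((hq _).sub (hq _)).add ((hq _).const_mul _)).sub ((hq _).const_mul _)).div_const
    4).congr fun a => ?_
  exact congr_fun₂ (ofQuadraticForm_dotProduct_mulVec (u a)) i j

end Matrix

namespace MartinMP

variable {I : Type*} {n : I → ℕ}

theorem mple_iff_le {x y : MP I n} : MPle x y ↔ x ≤ y := Iff.rfl

theorem mpos_iff_nonneg {x : MP I n} : MPos x ↔ 0 ≤ x := by
  simp only [MPos, Pi.le_def, Pi.zero_apply, Matrix.nonneg_iff_posSemidef]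

theorem exists_tendsto_of_monotone {κ : Type*} [Preorder κ] [IsDirectedOrder κ] [Nonempty κ]
    {u : κ → MP I n} (hu : Monotone u) (hb : BddAbove (Set.range u)) :
    ∃ L, Tendsto u atTop (𝓝 L) := by
  obtain ⟨c, hc⟩ := hb
  choose L hL using fun s => Matrix.exists_tendsto_of_monotone (u := fun a => u a s)
    (fun a b h => hu h s) ⟨c s, by rintro _ ⟨a, rfl⟩; exact hc ⟨a, rfl⟩ s⟩
  exact ⟨L, tendsto_pi_nhds.2 hL⟩

theorem exists_tendsto_of_antitone {κ : Type*} [Preorder κ] [IsDirectedOrder κ] [Nonempty κ]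
    {u : κ → MP I n} (hu : Antitone u) (hb : BddBelow (Set.range u)) :
    ∃ L, Tendsto u atTop (𝓝 L) := by
  obtain ⟨c, hc⟩ := hb
  obtain ⟨L, hL⟩ := exists_tendsto_of_monotone (u := -u) (fun a b h => neg_le_neg (hu h))
    ⟨-c, by rintro _ ⟨a, rfl⟩; exact neg_le_neg (hc ⟨a, rfl⟩)⟩
  exact ⟨-L, by simpa using hL.neg⟩

section Projection

theorem FY_add (Y : Finset I) (x y : MP I n) : FY Y (x + y) = FY Y x + FY Y y := by
  funext s; by_cases h : s ∈ Y <;> simp [FY, h]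

theorem FY_sub (Y : Finset I) (x y : MP I n) : FY Y (x - y) = FY Y x - FY Y y := by
  funext s; by_cases h : s ∈ Y <;> simp [FY, h]

theorem FY_sum {α : Type*} (Y : Finset I) (t : Finset α) (f : α → MP I n) :
    FY Y (∑ k ∈ t, f k) = ∑ k ∈ t, FY Y (f k) := by
  funext s; by_cases h : s ∈ Y <;> simp [FY, h, Finset.sum_apply]

theorem FY_FY (Z Y : Finset I) (x : MP I n) : FY Z (FY Y x) = FY (Z ∩ Y) x := by
  funext s; by_cases h₁ : s ∈ Z <;> by_cases h₂ : s ∈ Y <;> simp [FY, h₁, h₂]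

theorem FY_idem (Y : Finset I) (x : MP I n) : FY Y (FY Y x) = FY Y x := by
  rw [FY_FY, Finset.inter_self]

theorem FY_mono (Y : Finset I) {x y : MP I n} (h : x ≤ y) : FY Y x ≤ FY Y y := fun s => by
  by_cases hs : s ∈ Y <;> simp [FY, hs, h s]

theorem FY_nonneg (Y : Finset I) {x : MP I n} (hx : 0 ≤ x) : 0 ≤ FY Y x := fun s => by
  unfold FY; split_ifs; exacts [hx s, le_rfl]

theorem FY_mono_left {Z Z' : Finset I} (h : Z ⊆ Z') {x : MP I n} (hx : 0 ≤ x) :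
    FY Z x ≤ FY Z' x := fun s => by
  by_cases h₁ : s ∈ Z
  · simp [FY, h₁, h h₁]
  · unfold FY; split_ifs; exacts [hx s, le_rfl]

theorem FY_le_self (Y : Finset I) {x : MP I n} (hx : 0 ≤ x) : FY Y x ≤ x := fun s => by
  unfold FY; split_ifs; exacts [le_rfl, hx s]

theorem sub_FY_mono (Y : Finset I) {x y : MP I n} (h : x ≤ y) : x - FY Y x ≤ y - FY Y y :=
  fun s => by by_cases hs : s ∈ Y <;> simp [FY, hs, h s]

theorem continuous_FY (Y : Finset I) : Continuous (FY Y : MP I n → MP I n) :=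
  continuous_pi fun s => by
    by_cases hs : s ∈ Y
    · simpa [FY, hs] using continuous_apply s
    · simpa [FY, hs] using continuous_const

theorem FY_eq_of_subset {Y Z : Finset I} (h : Y ⊆ Z) {x : MP I n} (hx : FY Y x = x) :
    FY Z x = x := by
  rw [← hx, FY_FY, Finset.inter_eq_right.2 h]

theorem finSupp_FY (Y : Finset I) (x : MP I n) : FinSupp (FY Y x) := ⟨Y, FY_idem Y x⟩

theorem FinSupp.sub {x y : MP I n} (hx : FinSupp x) (hy : FinSupp y) : FinSupp (x - y) := by
  obtain ⟨A, hA⟩ := hx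
  obtain ⟨B, hB⟩ := hy
  refine ⟨A ∪ B, ?_⟩
  rw [FY_sub, FY_eq_of_subset Finset.subset_union_left hA,
    FY_eq_of_subset Finset.subset_union_right hB]

theorem FinSupp.eventually_FY_eq {x : MP I n} (hx : FinSupp x) :
    ∀ᶠ Z in atTop, FY Z x = x := by
  obtain ⟨Y, hY⟩ := hx
  filter_upwards [eventually_ge_atTop Y] with Z hZ using FY_eq_of_subset hZ hY

end Projection

theorem finSupp_zero : FinSupp (0 : MP I n) := ⟨∅, funext fun s => by simp [FY]⟩

structure IsPositiveLinearOnFinSupp (P₀ : MP I n → MP I n) : Prop where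
  map_add : ∀ x y : MP I n, FinSupp x → FinSupp y → P₀ (x + y) = P₀ x + P₀ y
  map_smul : ∀ (c : ℂ) (x : MP I n), FinSupp x → P₀ (c • x) = c • P₀ x
  nonneg : ∀ x : MP I n, FinSupp x → 0 ≤ x → 0 ≤ P₀ x

variable {P₀ : MP I n → MP I n}

namespace IsPositiveLinearOnFinSupp

theorem map_sub (hP : IsPositiveLinearOnFinSupp P₀) {x y : MP I n} (hx : FinSupp x)
    (hy : FinSupp y) : P₀ (x - y) = P₀ x - P₀ y :=
  eq_sub_of_add_eq <| by rw [← hP.map_add _ _ (hx.sub hy) hy, sub_add_cancel]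

theorem map_zero (hP : IsPositiveLinearOnFinSupp P₀) : P₀ 0 = 0 := by
  simpa using hP.map_sub finSupp_zero finSupp_zero

theorem mono (hP : IsPositiveLinearOnFinSupp P₀) {x y : MP I n} (hx : FinSupp x)
    (hy : FinSupp y) (h : x ≤ y) : P₀ x ≤ P₀ y :=
  sub_nonneg.1 <| hP.map_sub hy hx ▸ hP.nonneg _ (hy.sub hx) (sub_nonneg.2 h)

theorem monotone_comp_FY (hP : IsPositiveLinearOnFinSupp P₀) {x : MP I n} (hx : 0 ≤ x) :
    Monotone fun Z : Finset I => P₀ (FY Z x) :=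
  fun _ _ h => hP.mono (finSupp_FY _ x) (finSupp_FY _ x) (FY_mono_left h hx)

theorem continuous_comp_FY (hP : IsPositiveLinearOnFinSupp P₀) (Z : Finset I) :
    Continuous fun x : MP I n => P₀ (FY Z x) := by
  -- `x ↦ P₀ (F_Z x)` factors through the finite-dimensional space `∏ s ∈ Z, Mₛ`.
  let extendByZero : (∀ s : Z, Matrix (Fin (n s)) (Fin (n s)) ℂ) →ₗ[ℂ] MP I n :=
    { toFun := fun y s => if h : s ∈ Z then y ⟨s, h⟩ else 0
      map_add' := fun y y' => funext fun s => by by_cases h : s ∈ Z <;> simp [h]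
      map_smul' := fun c y => funext fun s => by by_cases h : s ∈ Z <;> simp [h] }
  have hfin : ∀ y, FinSupp (extendByZero y) := fun y =>
    ⟨Z, funext fun s => by by_cases h : s ∈ Z <;> simp [FY, extendByZero, h]⟩
  let g : (∀ s : Z, Matrix (Fin (n s)) (Fin (n s)) ℂ) →ₗ[ℂ] MP I n :=
    { toFun := fun y => P₀ (extendByZero y)
      map_add' := fun y y' => by
        change P₀ (extendByZero (y + y')) = P₀ (extendByZero y) + P₀ (extendByZero y')
        rw [extendByZero.map_add, hP.map_add _ _ (hfin y) (hfin y')]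
      map_smul' := fun c y => by
        change P₀ (extendByZero (c • y)) = c • P₀ (extendByZero y)
        rw [extendByZero.map_smul, hP.map_smul c _ (hfin y)] }
  have hg : (fun x : MP I n => P₀ (FY Z x)) = fun x => g fun s => x s := by
    funext x
    refine congrArg P₀ (funext fun s => ?_)
    by_cases h : s ∈ Z <;> simp [FY, extendByZero, h]
  rw [hg]
  exact g.continuous_of_finiteDimensional.comp (continuous_pi fun s => continuous_apply _)

end IsPositiveLinearOnFinSupp

section Extension

theorem tendsto_Papp {x : MP I n}
    (h : ∃ L, Tendsto (fun Z : Finset I => P₀ (FY Z x)) atTop (𝓝 L)) :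
    Tendsto (fun Z : Finset I => P₀ (FY Z x)) atTop (𝓝 (Papp P₀ x)) := by
  rw [Papp, dif_pos h]
  exact h.choose_spec

theorem Papp_eq_of_tendsto {x L : MP I n}
    (h : Tendsto (fun Z : Finset I => P₀ (FY Z x)) atTop (𝓝 L)) : Papp P₀ x = L :=
  tendsto_nhds_unique (tendsto_Papp ⟨L, h⟩) h

theorem InDP.nonneg {x : MP I n} (h : InDP P₀ x) : 0 ≤ x := mpos_iff_nonneg.1 h.1

theorem InDP.tendsto_Papp {x : MP I n} (h : InDP P₀ x) :
    Tendsto (fun Z : Finset I => P₀ (FY Z x)) atTop (𝓝 (Papp P₀ x)) :=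
  MartinMP.tendsto_Papp h.2

theorem Papp_nonneg (hP : IsPositiveLinearOnFinSupp P₀) {x : MP I n} (hx : 0 ≤ x) :
    0 ≤ Papp P₀ x := by
  by_cases h : ∃ L, Tendsto (fun Z : Finset I => P₀ (FY Z x)) atTop (𝓝 L)
  · exact ge_of_tendsto' (tendsto_Papp h) fun Z => hP.nonneg _ (finSupp_FY Z x) (FY_nonneg Z hx)
  · rw [Papp, dif_neg h]

theorem P₀_FY_le_Papp (hP : IsPositiveLinearOnFinSupp P₀) {x : MP I n} (h : InDP P₀ x)
    (Z : Finset I) : P₀ (FY Z x) ≤ Papp P₀ x :=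
  (hP.monotone_comp_FY h.nonneg).ge_of_tendsto h.tendsto_Papp Z

theorem inDP_and_Papp_le_of_forall_le (hP : IsPositiveLinearOnFinSupp P₀) {x c : MP I n}
    (hx : 0 ≤ x) (hc : ∀ Z, P₀ (FY Z x) ≤ c) : InDP P₀ x ∧ Papp P₀ x ≤ c := by
  obtain ⟨L, hL⟩ := exists_tendsto_of_monotone (hP.monotone_comp_FY hx)
    ⟨c, by rintro _ ⟨Z, rfl⟩; exact hc Z⟩
  exact ⟨⟨mpos_iff_nonneg.2 hx, L, hL⟩, Papp_eq_of_tendsto hL ▸ le_of_tendsto' hL hc⟩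

theorem inDP_and_Papp_le_of_le (hP : IsPositiveLinearOnFinSupp P₀) {z w : MP I n}
    (hz : 0 ≤ z) (hzw : z ≤ w) (hw : InDP P₀ w) : InDP P₀ z ∧ Papp P₀ z ≤ Papp P₀ w :=
  inDP_and_Papp_le_of_forall_le hP hz fun Z =>
    (hP.mono (finSupp_FY Z z) (finSupp_FY Z w) (FY_mono Z hzw)).trans (P₀_FY_le_Papp hP hw Z)

theorem InDP.of_le (hP : IsPositiveLinearOnFinSupp P₀) {z w : MP I n} (hz : 0 ≤ z)
    (hzw : z ≤ w) (hw : InDP P₀ w) : InDP P₀ z :=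
  (inDP_and_Papp_le_of_le hP hz hzw hw).1

theorem Papp_mono (hP : IsPositiveLinearOnFinSupp P₀) {z w : MP I n} (hz : 0 ≤ z)
    (hzw : z ≤ w) (hw : InDP P₀ w) : Papp P₀ z ≤ Papp P₀ w :=
  (inDP_and_Papp_le_of_le hP hz hzw hw).2

theorem FinSupp.tendsto_P₀_FY {x : MP I n} (hx : FinSupp x) :
    Tendsto (fun Z : Finset I => P₀ (FY Z x)) atTop (𝓝 (P₀ x)) :=
  tendsto_const_nhds.congr' <| hx.eventually_FY_eq.mono fun Z hZ => by simp only [hZ]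

theorem inDP_of_finSupp {x : MP I n} (hx : 0 ≤ x) (hfin : FinSupp x) : InDP P₀ x :=
  ⟨mpos_iff_nonneg.2 hx, _, hfin.tendsto_P₀_FY⟩

theorem Papp_of_finSupp {x : MP I n} (hfin : FinSupp x) : Papp P₀ x = P₀ x :=
  Papp_eq_of_tendsto hfin.tendsto_P₀_FY

theorem InDP.tendsto_P₀_FY_add (hP : IsPositiveLinearOnFinSupp P₀) {x y : MP I n}
    (hx : InDP P₀ x) (hy : InDP P₀ y) :
    Tendsto (fun Z : Finset I => P₀ (FY Z (x + y))) atTop (𝓝 (Papp P₀ x + Papp P₀ y)) :=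
  (hx.tendsto_Papp.add hy.tendsto_Papp).congr fun Z => by
    rw [FY_add, hP.map_add _ _ (finSupp_FY _ _) (finSupp_FY _ _)]

theorem InDP.add (hP : IsPositiveLinearOnFinSupp P₀) {x y : MP I n} (hx : InDP P₀ x)
    (hy : InDP P₀ y) : InDP P₀ (x + y) :=
  ⟨mpos_iff_nonneg.2 (add_nonneg hx.nonneg hy.nonneg), _, hx.tendsto_P₀_FY_add hP hy⟩

theorem Papp_add (hP : IsPositiveLinearOnFinSupp P₀) {x y : MP I n} (hx : InDP P₀ x)
    (hy : InDP P₀ y) : Papp P₀ (x + y) = Papp P₀ x + Papp P₀ y :=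
  Papp_eq_of_tendsto (hx.tendsto_P₀_FY_add hP hy)

theorem inDP_sum_and_Papp_sum (hP : IsPositiveLinearOnFinSupp P₀) {α : Type*} {t : Finset α}
    {f : α → MP I n} (h : ∀ k ∈ t, InDP P₀ (f k)) :
    InDP P₀ (∑ k ∈ t, f k) ∧ Papp P₀ (∑ k ∈ t, f k) = ∑ k ∈ t, Papp P₀ (f k) := by
  induction t using Finset.cons_induction with
  | empty =>
    simpa [Papp_of_finSupp finSupp_zero, hP.map_zero] using inDP_of_finSupp le_rfl finSupp_zero
  | cons a t ha ih =>
    obtain ⟨hsum, hPsum⟩ := ih fun k hk => h k (Finset.mem_cons_of_mem hk)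
    have hfa := h a (Finset.mem_cons_self a t)
    rw [Finset.sum_cons, Finset.sum_cons, Papp_add hP hfa hsum, hPsum]
    exact ⟨hfa.add hP hsum, rfl⟩

theorem inDP_and_tendsto_Papp_of_monotone (hP : IsPositiveLinearOnFinSupp P₀) {κ : Type*}
    [Preorder κ] [IsDirectedOrder κ] [Nonempty κ] {u : κ → MP I n} {L c : MP I n}
    (hu : Monotone u) (hdom : ∀ a, InDP P₀ (u a)) (hb : ∀ a, Papp P₀ (u a) ≤ c)
    (hL : Tendsto u atTop (𝓝 L)) :
    InDP P₀ L ∧ Tendsto (fun a => Papp P₀ (u a)) atTop (𝓝 (Papp P₀ L)) := by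
  have hPu : Monotone fun a => Papp P₀ (u a) := fun a b h =>
    Papp_mono hP (hdom a).nonneg (hu h) (hdom b)
  obtain ⟨A, hA⟩ := exists_tendsto_of_monotone hPu ⟨c, by rintro _ ⟨a, rfl⟩; exact hb a⟩
  have hLA : ∀ Z, P₀ (FY Z L) ≤ A := fun Z =>
    le_of_tendsto' (((hP.continuous_comp_FY Z).tendsto L).comp hL) fun a =>
      (P₀_FY_le_Papp hP (hdom a) Z).trans (hPu.ge_of_tendsto hA a)
  obtain ⟨hLdom, hPLA⟩ := inDP_and_Papp_le_of_forall_le hP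
    (ge_of_tendsto' hL fun a => (hdom a).nonneg) hLA
  have hAPL : A ≤ Papp P₀ L :=
    le_of_tendsto' hA fun a => Papp_mono hP (hdom a).nonneg (hu.ge_of_tendsto hL a) hLdom
  exact ⟨hLdom, le_antisymm hPLA hAPL ▸ hA⟩

theorem Papp_sub (hP : IsPositiveLinearOnFinSupp P₀) {x y : MP I n} (hxy : InDP P₀ (x - y))
    (hy : InDP P₀ y) : Papp P₀ (x - y) = Papp P₀ x - Papp P₀ y := by
  rw [eq_sub_iff_add_eq, ← Papp_add hP hxy hy, sub_add_cancel]

end Extension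

section Potential

theorem Superharmonic.Papp_le {x : MP I n} (hx : Superharmonic P₀ x) : Papp P₀ x ≤ x := hx.2

theorem Superharmonic.iterate_Papp (hP : IsPositiveLinearOnFinSupp P₀) {x : MP I n}
    (hx : Superharmonic P₀ x) : ∀ k, Superharmonic P₀ ((Papp P₀)^[k] x)
  | 0 => hx
  | k + 1 => by
    have hk := hx.iterate_Papp hP k
    have h0 := Papp_nonneg hP hk.1.nonneg
    rw [Function.iterate_succ_apply']
    exact ⟨hk.1.of_le hP h0 hk.Papp_le, Papp_mono hP h0 hk.Papp_le hk.1⟩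

theorem Superharmonic.antitone_iterate_Papp (hP : IsPositiveLinearOnFinSupp P₀) {x : MP I n}
    (hx : Superharmonic P₀ x) : Antitone fun k => (Papp P₀)^[k] x :=
  antitone_nat_of_succ_le fun k => by
    rw [Function.iterate_succ_apply']
    exact (hx.iterate_Papp hP k).Papp_le

theorem tendsto_Gval {v : MP I n}
    (h : ∃ L, Tendsto (fun N => ∑ k ∈ Finset.range N, (Papp P₀)^[k] v) atTop (𝓝 L)) :
    Tendsto (fun N => ∑ k ∈ Finset.range N, (Papp P₀)^[k] v) atTop (𝓝 (Gval P₀ v)) := by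
  rw [Gval, dif_pos h]
  exact h.choose_spec

theorem Gval_eq_of_tendsto {v L : MP I n}
    (h : Tendsto (fun N => ∑ k ∈ Finset.range N, (Papp P₀)^[k] v) atTop (𝓝 L)) :
    Gval P₀ v = L :=
  tendsto_nhds_unique (tendsto_Gval ⟨L, h⟩) h

theorem InDG.tendsto_Gval {v : MP I n} (hv : InDG P₀ v) :
    Tendsto (fun N => ∑ k ∈ Finset.range N, (Papp P₀)^[k] v) atTop (𝓝 (Gval P₀ v)) :=
  MartinMP.tendsto_Gval hv.2

theorem InDG.monotone_sum {v : MP I n} (hv : InDG P₀ v) :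
    Monotone fun N => ∑ k ∈ Finset.range N, (Papp P₀)^[k] v :=
  monotone_nat_of_le_succ fun N => by
    rw [Finset.sum_range_succ]
    exact le_add_of_nonneg_right (hv.1 N).nonneg

theorem InDG.le_Gval {v : MP I n} (hv : InDG P₀ v) : v ≤ Gval P₀ v := by
  simpa using hv.monotone_sum.ge_of_tendsto hv.tendsto_Gval 1

theorem InDG.inDP_sum_range (hP : IsPositiveLinearOnFinSupp P₀) {v : MP I n} (hv : InDG P₀ v)
    (N : ℕ) : InDP P₀ (∑ k ∈ Finset.range N, (Papp P₀)^[k] v) :=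
  (inDP_sum_and_Papp_sum hP fun k _ => hv.1 k).1

theorem InDG.Papp_sum_range (hP : IsPositiveLinearOnFinSupp P₀) {v : MP I n} (hv : InDG P₀ v)
    (N : ℕ) : Papp P₀ (∑ k ∈ Finset.range N, (Papp P₀)^[k] v) =
      ∑ k ∈ Finset.range (N + 1), (Papp P₀)^[k] v - v := by
  simp only [(inDP_sum_and_Papp_sum hP fun k _ => hv.1 k).2, Finset.sum_range_succ',
    Function.iterate_succ_apply', Function.iterate_zero, id, add_sub_cancel_right]

theorem InDG.inDP_Gval_and_tendsto (hP : IsPositiveLinearOnFinSupp P₀) {v : MP I n}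
    (hv : InDG P₀ v) : InDP P₀ (Gval P₀ v) ∧
      Tendsto (fun N => Papp P₀ (∑ k ∈ Finset.range N, (Papp P₀)^[k] v)) atTop
        (𝓝 (Papp P₀ (Gval P₀ v))) :=
  inDP_and_tendsto_Papp_of_monotone hP hv.monotone_sum (hv.inDP_sum_range hP)
    (fun N => hv.Papp_sum_range hP N ▸
      sub_le_sub_right (hv.monotone_sum.ge_of_tendsto hv.tendsto_Gval _) v)
    hv.tendsto_Gval

theorem InDG.Papp_Gval (hP : IsPositiveLinearOnFinSupp P₀) {v : MP I n} (hv : InDG P₀ v) :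
    Papp P₀ (Gval P₀ v) = Gval P₀ v - v := by
  refine tendsto_nhds_unique (hv.inDP_Gval_and_tendsto hP).2 ?_
  simp_rw [hv.Papp_sum_range hP]
  exact (hv.tendsto_Gval.comp (tendsto_add_atTop_nat 1)).sub_const v

theorem InDG.superharmonic_Gval (hP : IsPositiveLinearOnFinSupp P₀) {v : MP I n}
    (hv : InDG P₀ v) : Superharmonic P₀ (Gval P₀ v) :=
  ⟨(hv.inDP_Gval_and_tendsto hP).1, by
    rw [mple_iff_le, hv.Papp_Gval hP]
    exact sub_le_self _ (hv.1 0).nonneg⟩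

theorem InDG.iterate_Papp_Gval (hP : IsPositiveLinearOnFinSupp P₀) {v : MP I n}
    (hv : InDG P₀ v) (N : ℕ) :
    (Papp P₀)^[N] (Gval P₀ v) = Gval P₀ v - ∑ k ∈ Finset.range N, (Papp P₀)^[k] v := by
  induction N with
  | zero => simp
  | succ N ih =>
    have hdom := ((hv.superharmonic_Gval hP).iterate_Papp hP N).1
    rw [ih] at hdom
    rw [Function.iterate_succ_apply', ih, Papp_sub hP hdom (hv.inDP_sum_range hP N),
      hv.Papp_Gval hP, hv.Papp_sum_range hP N]
    abel

theorem InDG.tendsto_iterate_Papp_Gval (hP : IsPositiveLinearOnFinSupp P₀) {v : MP I n}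
    (hv : InDG P₀ v) : Tendsto (fun N => (Papp P₀)^[N] (Gval P₀ v)) atTop (𝓝 0) := by
  simpa [hv.iterate_Papp_Gval hP] using hv.tendsto_Gval.const_sub (Gval P₀ v)

theorem Superharmonic.tendsto_iterate_Papp_of_le_Gval (hP : IsPositiveLinearOnFinSupp P₀)
    {x v : MP I n} (hx : Superharmonic P₀ x) (hv : InDG P₀ v) (hxv : x ≤ Gval P₀ v) :
    Tendsto (fun N => (Papp P₀)^[N] x) atTop (𝓝 0) := by
  have hle : ∀ N, (Papp P₀)^[N] x ≤ (Papp P₀)^[N] (Gval P₀ v) := by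
    intro N
    induction N with
    | zero => exact hxv
    | succ N ih =>
      rw [Function.iterate_succ_apply', Function.iterate_succ_apply']
      exact Papp_mono hP (hx.iterate_Papp hP N).1.nonneg ih
        ((hv.superharmonic_Gval hP).iterate_Papp hP N).1
  have hnonneg : ∀ N, 0 ≤ (Papp P₀)^[N] x := fun N => (hx.iterate_Papp hP N).1.nonneg
  obtain ⟨ℓ, hℓ⟩ := exists_tendsto_of_antitone (hx.antitone_iterate_Papp hP)
    ⟨0, by rintro _ ⟨N, rfl⟩; exact hnonneg N⟩
  obtain rfl : ℓ = 0 := le_antisymm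
    (le_of_tendsto_of_tendsto' hℓ (hv.tendsto_iterate_Papp_Gval hP) hle)
    (ge_of_tendsto' hℓ hnonneg)
  exact hℓ

theorem Superharmonic.inDG_and_Gval_sub_Papp (hP : IsPositiveLinearOnFinSupp P₀) {x : MP I n}
    (hx : Superharmonic P₀ x) (h0 : Tendsto (fun N => (Papp P₀)^[N] x) atTop (𝓝 0)) :
    InDG P₀ (x - Papp P₀ x) ∧ Gval P₀ (x - Papp P₀ x) = x := by
  have hstep : ∀ k, InDP P₀ ((Papp P₀)^[k] x - (Papp P₀)^[k + 1] x) := fun k =>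
    InDP.of_le hP (sub_nonneg.2 (hx.antitone_iterate_Papp hP k.le_succ))
      (sub_le_self _ (hx.iterate_Papp hP (k + 1)).1.nonneg) (hx.iterate_Papp hP k).1
  have hiter : ∀ k, (Papp P₀)^[k] (x - Papp P₀ x) = (Papp P₀)^[k] x - (Papp P₀)^[k + 1] x := by
    intro k
    induction k with
    | zero => rfl
    | succ k ih =>
      rw [Function.iterate_succ_apply', ih, Papp_sub hP (hstep k) (hx.iterate_Papp hP _).1,
        ← Function.iterate_succ_apply' (Papp P₀) k x,
        ← Function.iterate_succ_apply' (Papp P₀) (k + 1) x]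
  have htele : ∀ N, ∑ k ∈ Finset.range N, (Papp P₀)^[k] (x - Papp P₀ x) = x - (Papp P₀)^[N] x :=
    fun N => by rw [Finset.sum_congr rfl fun k _ => hiter k, Finset.sum_range_sub']; rfl
  have hsum : Tendsto (fun N => ∑ k ∈ Finset.range N, (Papp P₀)^[k] (x - Papp P₀ x)) atTop
      (𝓝 x) := by
    simpa only [htele, sub_zero] using h0.const_sub x
  exact ⟨⟨fun k => hiter k ▸ hstep k, x, hsum⟩, Gval_eq_of_tendsto hsum⟩

theorem Superharmonic.isPotential_of_le_Gval (hP : IsPositiveLinearOnFinSupp P₀)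
    {x v : MP I n} (hx : Superharmonic P₀ x) (hv : InDG P₀ v) (hxv : x ≤ Gval P₀ v) :
    IsPotential P₀ x :=
  let h := hx.inDG_and_Gval_sub_Papp hP (hx.tendsto_iterate_Papp_of_le_Gval hP hv hxv)
  ⟨_, h.1, h.2.symm⟩

end Potential

section Balayage

variable (Y : Finset I)

theorem FY_QY (z : MP I n) : FY Y (QY P₀ Y z) = 0 := by
  rw [QY, FY_sub, FY_idem, sub_self]

theorem QY_nonneg (hP : IsPositiveLinearOnFinSupp P₀) {z : MP I n} (hz : 0 ≤ z) :
    0 ≤ QY P₀ Y z :=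
  sub_nonneg.2 (FY_le_self Y (Papp_nonneg hP hz))

theorem QY_le_sub_FY (hP : IsPositiveLinearOnFinSupp P₀) {y z : MP I n} (hz : 0 ≤ z)
    (hzy : z ≤ y) (hy : Superharmonic P₀ y) : QY P₀ Y z ≤ y - FY Y y :=
  sub_FY_mono Y ((Papp_mono hP hz hzy hy.1).trans hy.Papp_le)

theorem iterate_QY_nonneg (hP : IsPositiveLinearOnFinSupp P₀) {a : MP I n} (ha : 0 ≤ a) :
    ∀ k, 0 ≤ (QY P₀ Y)^[k] a
  | 0 => ha
  | k + 1 => by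
    rw [Function.iterate_succ_apply']
    exact QY_nonneg Y hP (iterate_QY_nonneg hP ha k)

theorem monotone_sum_iterate_QY (hP : IsPositiveLinearOnFinSupp P₀) {a : MP I n}
    (ha : 0 ≤ a) : Monotone fun N => ∑ k ∈ Finset.range N, (QY P₀ Y)^[k] a :=
  monotone_nat_of_le_succ fun N => by
    rw [Finset.sum_range_succ]
    exact le_add_of_nonneg_right (iterate_QY_nonneg Y hP ha N)

theorem sum_range_succ_iterate_QY (hP : IsPositiveLinearOnFinSupp P₀) {a : MP I n} {N : ℕ}
    (h : ∀ k < N, InDP P₀ ((QY P₀ Y)^[k] a)) :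
    ∑ k ∈ Finset.range (N + 1), (QY P₀ Y)^[k] a =
      a + QY P₀ Y (∑ k ∈ Finset.range N, (QY P₀ Y)^[k] a) := by
  rw [Finset.sum_range_succ', Function.iterate_zero_apply, add_comm, QY,
    (inDP_sum_and_Papp_sum hP fun k hk => h k (Finset.mem_range.1 hk)).2, FY_sum,
    ← Finset.sum_sub_distrib]
  simp only [Function.iterate_succ_apply', QY]

theorem inDP_iterate_QY_and_sum_le (hP : IsPositiveLinearOnFinSupp P₀) {a y : MP I n}
    (ha : 0 ≤ a) (hy : Superharmonic P₀ y) (hay : a ≤ FY Y y) :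
    ∀ N, (∀ k < N, InDP P₀ ((QY P₀ Y)^[k] a)) ∧
      ∑ k ∈ Finset.range N, (QY P₀ Y)^[k] a ≤ y
  | 0 => ⟨fun k hk => absurd hk k.not_lt_zero, by simpa using hy.1.nonneg⟩
  | N + 1 => by
    obtain ⟨hdom, hle⟩ := inDP_iterate_QY_and_sum_le hP ha hy hay N
    have hsum : 0 ≤ ∑ k ∈ Finset.range N, (QY P₀ Y)^[k] a :=
      Finset.sum_nonneg fun k _ => iterate_QY_nonneg Y hP ha k
    have hle' : ∑ k ∈ Finset.range (N + 1), (QY P₀ Y)^[k] a ≤ y := by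
      rw [sum_range_succ_iterate_QY Y hP hdom]
      calc _ ≤ FY Y y + (y - FY Y y) := add_le_add hay (QY_le_sub_FY Y hP hsum hle hy)
        _ = y := add_sub_cancel _ _
    have hN : InDP P₀ ((QY P₀ Y)^[N] a) := by
      refine InDP.of_le hP (iterate_QY_nonneg Y hP ha N) (le_trans ?_ hle') hy.1
      rw [Finset.sum_range_succ]
      exact le_add_of_nonneg_left hsum
    exact ⟨fun k hk => (Nat.lt_succ_iff_lt_or_eq.1 hk).elim (hdom k) (· ▸ hN), hle'⟩

theorem superharmonic_and_FY_eq_of_tendsto_sum_iterate_QY (hP : IsPositiveLinearOnFinSupp P₀)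
    {x L : MP I n} (hx : Superharmonic P₀ x)
    (hL : Tendsto (fun N => ∑ k ∈ Finset.range N, (QY P₀ Y)^[k] (FY Y x)) atTop (𝓝 L))
    (hLx : L ≤ x) : Superharmonic P₀ L ∧ FY Y L = FY Y x := by
  have hbound := inDP_iterate_QY_and_sum_le Y hP (FY_nonneg Y hx.1.nonneg) hx le_rfl
  have hdom : ∀ N, InDP P₀ (∑ k ∈ Finset.range N, (QY P₀ Y)^[k] (FY Y x)) := fun N =>
    (inDP_sum_and_Papp_sum hP fun k hk => (hbound N).1 k (Finset.mem_range.1 hk)).1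
  obtain ⟨hLdom, hPL⟩ := inDP_and_tendsto_Papp_of_monotone hP
    (monotone_sum_iterate_QY Y hP (FY_nonneg Y hx.1.nonneg)) hdom
    (fun N => Papp_mono hP (hdom N).nonneg (hbound N).2 hx.1) hL
  have hLeq : L = FY Y x + QY P₀ Y L := by
    refine tendsto_nhds_unique (hL.comp (tendsto_add_atTop_nat 1)) ?_
    refine (tendsto_const_nhds.add (hPL.sub (((continuous_FY Y).tendsto _).comp hPL))).congr
      fun N => ?_
    exact (sum_range_succ_iterate_QY Y hP (hbound N).1).symm
  refine ⟨⟨hLdom, ?_⟩, by rw [hLeq, FY_add, FY_QY, FY_idem, add_zero]⟩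
  calc Papp P₀ L = FY Y (Papp P₀ L) + QY P₀ Y L := by rw [QY]; abel
    _ ≤ FY Y x + QY P₀ Y L :=
      add_le_add_left (FY_mono Y ((Papp_mono hP hLdom.nonneg hLx hx.1).trans hx.Papp_le)) _
    _ = L := hLeq.symm

end Balayage

/-- Theorem 2.11 (balayage theorem). Assume `P` is transient, i.e. every positive finitely
supported element of `M` lies in `D(G)`. Let `x` be superharmonic and `Y ⊆ I` finite. Then:
(i) all the iterates occurring in `P_Y x = ∑ₖ ((id − F_Y) ∘ P)ᵏ (F_Y x)` are defined and the
series converges in `M` to some `L` with `L ≤ x` and `F_Y L = F_Y x`;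
(ii) if `y` is superharmonic with `F_Y x ≤ F_Y y`, then `L ≤ y`;
(iii) `L` is a potential. -/
theorem balayage
    {I : Type*} {n : I → ℕ} (P₀ : MP I n → MP I n)
    (hadd : ∀ x y : MP I n, FinSupp x → FinSupp y → P₀ (x + y) = P₀ x + P₀ y)
    (hsmul : ∀ (c : ℂ) (x : MP I n), FinSupp x → P₀ (c • x) = c • P₀ x)
    (hpos : ∀ x : MP I n, FinSupp x → MPos x → MPos (P₀ x))
    (htrans : ∀ x : MP I n, MPos x → FinSupp x → InDG P₀ x)
    (x : MP I n) (hx : Superharmonic P₀ x) (Y : Finset I) :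
    (∀ m : ℕ, InDP P₀ ((QY P₀ Y)^[m] (FY Y x))) ∧
    ∃ L : MP I n,
      Tendsto (fun N : ℕ => ∑ k ∈ Finset.range N, (QY P₀ Y)^[k] (FY Y x)) atTop (nhds L) ∧
      MPle L x ∧ FY Y L = FY Y x ∧
      (∀ y : MP I n, Superharmonic P₀ y → MPle (FY Y x) (FY Y y) → MPle L y) ∧
      IsPotential P₀ L := by
  have hP : IsPositiveLinearOnFinSupp P₀ := ⟨hadd, hsmul, fun x hfin hx =>
    mpos_iff_nonneg.1 (hpos x hfin (mpos_iff_nonneg.2 hx))⟩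
  have hFYx : 0 ≤ FY Y x := FY_nonneg Y hx.1.nonneg
  have hbound := fun y (hy : Superharmonic P₀ y) (hxy : FY Y x ≤ FY Y y) =>
    inDP_iterate_QY_and_sum_le Y hP hFYx hy hxy
  obtain ⟨L, hL⟩ := exists_tendsto_of_monotone (monotone_sum_iterate_QY Y hP hFYx)
    ⟨x, by rintro _ ⟨N, rfl⟩; exact (hbound x hx le_rfl N).2⟩
  have hmin : ∀ y, Superharmonic P₀ y → FY Y x ≤ FY Y y → L ≤ y := fun y hy hxy =>
    le_of_tendsto' hL fun N => (hbound y hy hxy N).2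
  obtain ⟨hLsup, hFYL⟩ :=
    superharmonic_and_FY_eq_of_tendsto_sum_iterate_QY Y hP hx hL (hmin x hx le_rfl)
  have hG : InDG P₀ (FY Y x) := htrans _ (mpos_iff_nonneg.2 hFYx) (finSupp_FY Y x)
  have hLG : L ≤ Gval P₀ (FY Y x) :=
    hmin _ (hG.superharmonic_Gval hP) (by simpa only [FY_idem] using FY_mono Y hG.le_Gval)
  exact ⟨fun m => (hbound x hx le_rfl (m + 1)).1 m m.lt_succ_self, L, hL, hmin x hx le_rfl,
    hFYL, hmin, hLsup.isPotential_of_le_Gval hP hG hLG⟩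

end MartinMP
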